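/- Let γ ∈ [0,1), β ∈ (0,1], and let (c_t)_{t≥0} and (ρ_t)_{t≥0} be sequences of nonnegative reals with ρ_0 ≥ β. Set ρ_{-1} := 1, C_{-1} := C_{-2} := 1, C_t := ∏_{u=0}^{t} c_u for t ≥ 0, α_0 := 1 − ρ_0 and α_t := ρ_{t-1} − c_{t-1}·ρ_t for t ≥ 1. If α_t ≥ 0 for all t ≥ 0 and the series ∑_{t=0}^∞ γ^t C_{t-1} ρ_t converges, then ∑_{t=0}^∞ γ^t C_{t-2} α_t ≤ 1 − (1 − γ)·β. -/

import Mathlib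

/-!
With `S_t = γ^t C_{t-1} ρ_t`, the terms of the series satisfy
`γ^{t+1} C_{t-1} α_{t+1} = γ S_t - S_{t+1}`, so the series telescopes and sums exactly to
`1 - (1 - γ) ∑ S_t`; since `S ≥ 0`, `∑ S_t ≥ S_0 = ρ_0 ≥ β`.
-/

/-- The coefficients `α_t`: `α_0 = 1 - ρ_0` and `α_t = ρ_{t-1} - c_{t-1} * ρ_t` for
`t ≥ 1`. -/
def vtraceAlpha (c ρ : ℕ → ℝ) : ℕ → ℝ
  | 0 => 1 - ρ 0
  | (t + 1) => ρ t - c t * ρ (t + 1)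

open Finset

def discountedTrace (γ : ℝ) (c ρ : ℕ → ℝ) (t : ℕ) : ℝ :=
  γ ^ t * (∏ u ∈ range t, c u) * ρ t

lemma discountedTrace_nonneg {γ : ℝ} {c ρ : ℕ → ℝ} (hγ : 0 ≤ γ) (hc : ∀ t, 0 ≤ c t)
    (hρ : ∀ t, 0 ≤ ρ t) (t : ℕ) : 0 ≤ discountedTrace γ c ρ t :=
  mul_nonneg (mul_nonneg (pow_nonneg hγ t) (prod_nonneg fun u _ => hc u)) (hρ t)

lemma discountedTrace_zero (γ : ℝ) (c ρ : ℕ → ℝ) : discountedTrace γ c ρ 0 = ρ 0 := by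
  simp [discountedTrace]

lemma discounted_vtraceAlpha_succ (γ : ℝ) (c ρ : ℕ → ℝ) (t : ℕ) :
    γ ^ (t + 1) * (∏ u ∈ range t, c u) * vtraceAlpha c ρ (t + 1)
      = γ * discountedTrace γ c ρ t - discountedTrace γ c ρ (t + 1) := by
  simp only [discountedTrace, vtraceAlpha, prod_range_succ]
  ring

lemma HasSum.hasSum_of_discounted_telescope {R : Type*} [Ring R] [TopologicalSpace R]
    [IsTopologicalRing R] {S g : ℕ → R} {s : R} (hS : HasSum S s) (γ a : R)
    (hg0 : g 0 = a - S 0) (hg : ∀ t, g (t + 1) = γ * S t - S (t + 1)) :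
    HasSum g (a - (1 - γ) * s) := by
  rw [← hasSum_nat_add_iff' 1]
  have hshift : HasSum (fun t => S (t + 1)) (s - S 0) := by
    simpa using (hasSum_nat_add_iff' 1).mpr hS
  convert (hS.mul_left γ).sub hshift using 1
  · exact funext hg
  · simp only [sum_range_one, hg0]
    noncomm_ring

theorem hasSum_discounted_vtraceAlpha {γ s : ℝ} {c ρ : ℕ → ℝ}
    (hS : HasSum (discountedTrace γ c ρ) s) :
    HasSum (fun t : ℕ => γ ^ t * (∏ u ∈ range (t - 1), c u) * vtraceAlpha c ρ t)
      (1 - (1 - γ) * s) :=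
  hS.hasSum_of_discounted_telescope γ 1 (by simp [vtraceAlpha, discountedTrace_zero])
    (discounted_vtraceAlpha_succ γ c ρ)

theorem vtrace_alpha_series_le_contraction_const_general
    (γ : ℝ) (hγ0 : 0 ≤ γ) (hγ1 : γ < 1)
    (β : ℝ)
    (c ρ : ℕ → ℝ) (hc : ∀ t, 0 ≤ c t) (hρ : ∀ t, 0 ≤ ρ t)
    (hρ0 : β ≤ ρ 0)
    (hsum : Summable fun t : ℕ => γ ^ t * (∏ u ∈ Finset.range t, c u) * ρ t) :
    ∑' t : ℕ, γ ^ t * (∏ u ∈ Finset.range (t - 1), c u) * vtraceAlpha c ρ t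
      ≤ 1 - (1 - γ) * β := by
  have hS : HasSum (discountedTrace γ c ρ) (∑' t, discountedTrace γ c ρ t) := hsum.hasSum
  have hβ_le : β ≤ ∑' t, discountedTrace γ c ρ t := by
    calc β ≤ ρ 0 := hρ0
      _ = discountedTrace γ c ρ 0 := (discountedTrace_zero γ c ρ).symm
      _ ≤ _ := le_hasSum hS 0 fun t _ => discountedTrace_nonneg hγ0 hc hρ t
  rw [(hasSum_discounted_vtraceAlpha hS).tsum_eq]
  have h1γ : 0 ≤ 1 - γ := sub_nonneg.mpr hγ1.le
  gcongr

/-- with `C_{t-1} = ∏_{u ∈ range t} c_u` and `C_{t-2} = ∏_{u ∈ range (t-1)} c_u`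
(conventions `C_{-1} = C_{-2} = 1` handled by ℕ-subtraction), if `ρ_0 ≥ β`, all
`α_t ≥ 0` and `∑ γ^t C_{t-1} ρ_t` converges, then
`∑ γ^t C_{t-2} α_t ≤ 1 - (1 - γ) * β`. -/
theorem vtrace_alpha_series_le_contraction_const
    (γ : ℝ) (hγ0 : 0 ≤ γ) (hγ1 : γ < 1)
    (β : ℝ) (hβ0 : 0 < β) (hβ1 : β ≤ 1)
    (c ρ : ℕ → ℝ) (hc : ∀ t, 0 ≤ c t) (hρ : ∀ t, 0 ≤ ρ t)
    (hρ0 : β ≤ ρ 0)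
    (hα : ∀ t, 0 ≤ vtraceAlpha c ρ t)
    (hsum : Summable fun t : ℕ => γ ^ t * (∏ u ∈ Finset.range t, c u) * ρ t) :
    ∑' t : ℕ, γ ^ t * (∏ u ∈ Finset.range (t - 1), c u) * vtraceAlpha c ρ t
      ≤ 1 - (1 - γ) * β :=
  vtrace_alpha_series_le_contraction_const_general γ hγ0 hγ1 β c ρ hc hρ hρ0 hsum
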